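/- Suppose (a_n), (b_n) is a b_1-SAC pair and G is the invariant game with moves {(a_n, b_n), (b_n, a_n) : n ≥ 1}. Then (G⋆)⋆ = G, i.e., the nonzero P-positions of G⋆ equal the move set of G. -/
import Mathlib
-- assume part2 content is prepended later; for dev, include it:

private def cnt (f : ℕ → ℕ) (x : ℕ) : ℕ := Nat.findGreatest (fun n => f n ≤ x) x

private lemma cnt_le_iff {f : ℕ → ℕ} (hf : StrictMono f) (hf0 : f 0 = 0)
    (n x : ℕ) : n ≤ cnt f x ↔ f n ≤ x := by
  constructor
  · intro h
    have h2 : f (cnt f x) ≤ x :=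
      Nat.findGreatest_spec (P := fun n => f n ≤ x) (Nat.zero_le x) (by simp [hf0])
    exact le_trans (hf.monotone h) h2
  · intro h
    exact Nat.le_findGreatest (le_trans hf.le_apply h) h

private lemma cnt_lt_iff {f : ℕ → ℕ} (hf : StrictMono f) (hf0 : f 0 = 0)
    (n x : ℕ) : cnt f x < n ↔ x < f n := by
  rw [← Nat.not_le, ← Nat.not_le, not_iff_not]
  exact cnt_le_iff hf hf0 n x

private lemma cnt_eq {f : ℕ → ℕ} (hf : StrictMono f) (hf0 : f 0 = 0)
    {m x : ℕ} (h1 : f m ≤ x) (h2 : x < f (m + 1)) : cnt f x = m := by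
  have := (cnt_le_iff hf hf0 m x).2 h1
  have := (cnt_lt_iff hf hf0 (m+1) x).2 h2
  omega

section seq
variable {a b : ℕ → ℕ}

private lemma bmono (hbpos : ∀ n, 1 ≤ n → 1 ≤ b n)
    (hsup : ∀ m n : ℕ, b m + b n ≤ b (m + n) ∧ b (m + n) < b m + b n + b 1) :
    StrictMono b := by
  apply strictMono_nat_of_lt_succ
  intro n
  have := (hsup n 1).1
  have := hbpos 1 le_rfl
  omega

private lemma b1ge2 (ha1 : a 1 = 1) (hbpos : ∀ n, 1 ≤ n → 1 ≤ b n)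
    (hcomp : ∀ k : ℕ, 1 ≤ k → ((∃ n, 1 ≤ n ∧ a n = k) ↔ ¬ ∃ n, 1 ≤ n ∧ b n = k)) :
    2 ≤ b 1 := by
  have h1 := (hcomp 1 le_rfl).1 ⟨1, le_rfl, ha1⟩
  have := hbpos 1 le_rfl
  rcases Nat.lt_or_ge (b 1) 2 with h | h
  · exact absurd ⟨1, le_rfl, by omega⟩ h1
  · exact h

private lemma b_ge_two_mul (ha1 : a 1 = 1) (hbpos : ∀ n, 1 ≤ n → 1 ≤ b n)
    (hcomp : ∀ k : ℕ, 1 ≤ k → ((∃ n, 1 ≤ n ∧ a n = k) ↔ ¬ ∃ n, 1 ≤ n ∧ b n = k))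
    (hb0 : b 0 = 0)
    (hsup : ∀ m n : ℕ, b m + b n ≤ b (m + n) ∧ b (m + n) < b m + b n + b 1) :
    ∀ n, 2 * n ≤ b n := by
  intro n
  induction n with
  | zero => omega
  | succ n ih =>
    have := (hsup n 1).1
    have := b1ge2 ha1 hbpos hcomp
    omega

private lemma disj (hainc : StrictMono a) (ha0 : a 0 = 0)
    (hcomp : ∀ k : ℕ, 1 ≤ k → ((∃ n, 1 ≤ n ∧ a n = k) ↔ ¬ ∃ n, 1 ≤ n ∧ b n = k)) :
    ∀ m n, 1 ≤ m → 1 ≤ n → a m ≠ b n := by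
  intro m n hm hn he
  have ham : 1 ≤ a m := by have : m ≤ a m := hainc.le_apply; omega
  exact (hcomp (a m) ham).1 ⟨m, hm, rfl⟩ ⟨n, hn, he.symm⟩

private lemma total (hcomp : ∀ k : ℕ, 1 ≤ k → ((∃ n, 1 ≤ n ∧ a n = k) ↔ ¬ ∃ n, 1 ≤ n ∧ b n = k)) :
    ∀ k, 1 ≤ k → (∃ n, 1 ≤ n ∧ a n = k) ∨ (∃ n, 1 ≤ n ∧ b n = k) := by
  intro k hk
  by_cases h : ∃ n, 1 ≤ n ∧ a n = k
  · exact Or.inl h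
  · exact Or.inr (by
      by_contra h2
      exact h ((hcomp k hk).2 h2))

private lemma cnt_add (hainc : StrictMono a) (ha0 : a 0 = 0)
    (hbinc : StrictMono b) (hb0 : b 0 = 0)
    (hcomp : ∀ k : ℕ, 1 ≤ k → ((∃ n, 1 ≤ n ∧ a n = k) ↔ ¬ ∃ n, 1 ≤ n ∧ b n = k)) :
    ∀ x, cnt a x + cnt b x = x := by
  intro x
  induction x with
  | zero => simp [cnt]
  | succ x ih =>
    set c := cnt a x with hc
    set d := cnt b x with hd
    have hac : a c ≤ x := (cnt_le_iff hainc ha0 c x).1 le_rfl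
    have hac1 : x < a (c + 1) := (cnt_lt_iff hainc ha0 (c+1) x).1 (by omega)
    have hbd : b d ≤ x := (cnt_le_iff hbinc hb0 d x).1 le_rfl
    have hbd1 : x < b (d + 1) := (cnt_lt_iff hbinc hb0 (d+1) x).1 (by omega)
    -- a-rep of x+1 iff a (c+1) = x+1
    have harep : (∃ n, 1 ≤ n ∧ a n = x + 1) ↔ a (c + 1) = x + 1 := by
      constructor
      · rintro ⟨n, hn, he⟩
        have h1 : c < n := by
          by_contra h
          have : a n ≤ a c := hainc.monotone (by omega)
          omega
        have h2 : n ≤ c + 1 := by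
          by_contra h
          have : a (c+1) < a n := hainc (by omega)
          omega
        have : n = c + 1 := by omega
        rwa [this] at he
      · intro h
        exact ⟨c + 1, by omega, h⟩
    have hbrep : (∃ n, 1 ≤ n ∧ b n = x + 1) ↔ b (d + 1) = x + 1 := by
      constructor
      · rintro ⟨n, hn, he⟩
        have h1 : d < n := by
          by_contra h
          have : b n ≤ b d := hbinc.monotone (by omega)
          omega
        have h2 : n ≤ d + 1 := by
          by_contra h
          have : b (d+1) < b n := hbinc (by omega)
          omega
        have : n = d + 1 := by omega
        rwa [this] at he
      · intro h
        exact ⟨d + 1, by omega, h⟩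
    by_cases h : a (c + 1) = x + 1
    · have hna : cnt a (x+1) = c + 1 := by
        apply cnt_eq hainc ha0 (by omega)
        have : a (c+1) < a (c+1+1) := hainc (Nat.lt_succ_self _)
        omega
      have hnb : cnt b (x+1) = d := by
        apply cnt_eq hbinc hb0 (by omega)
        have hne : b (d+1) ≠ x + 1 := by
          intro he
          exact ((hcomp (x+1) (by omega)).1 (harep.2 h)) (hbrep.2 he)
        omega
      omega
    · have hbe : b (d + 1) = x + 1 := by
        rcases total hcomp (x+1) (by omega) with hA | hB
        · exact absurd (harep.1 hA) h
        · exact hbrep.1 hB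
      have hna : cnt a (x+1) = c := by
        apply cnt_eq hainc ha0 (by omega)
        omega
      have hnb : cnt b (x+1) = d + 1 := by
        apply cnt_eq hbinc hb0 (by omega)
        have : b (d+1) < b (d+1+1) := hbinc (Nat.lt_succ_self _)
        omega
      omega

end seq

section seq2
variable {a b : ℕ → ℕ}
variable (ha0 : a 0 = 0) (hb0 : b 0 = 0) (ha1 : a 1 = 1)
    (hainc : StrictMono a)
    (hbpos : ∀ n, 1 ≤ n → 1 ≤ b n)
    (hcomp : ∀ k : ℕ, 1 ≤ k → ((∃ n, 1 ≤ n ∧ a n = k) ↔ ¬ ∃ n, 1 ≤ n ∧ b n = k))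
    (hsup : ∀ m n : ℕ, b m + b n ≤ b (m + n) ∧ b (m + n) < b m + b n + b 1)

include ha0 hb0 ha1 hainc hbpos hcomp hsup

private lemma cnt_b_at_a : ∀ n, cnt a (a n) = n ∧ cnt b (a n) = a n - n := by
  intro n
  have hbinc := bmono hbpos hsup
  have h1 : cnt a (a n) = n :=
    cnt_eq hainc ha0 le_rfl (hainc (Nat.lt_succ_self n))
  have h2 := cnt_add hainc ha0 hbinc hb0 hcomp (a n)
  exact ⟨h1, by omega⟩

private lemma a_lt_b : ∀ n, 1 ≤ n → a n < b n := by
  intro n hn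
  have hbinc := bmono hbpos hsup
  have h2n := b_ge_two_mul ha1 hbpos hcomp hb0 hsup n
  have h1 : cnt b (b n) = n :=
    cnt_eq hbinc hb0 le_rfl (hbinc (Nat.lt_succ_self n))
  have h2 := cnt_add hainc ha0 hbinc hb0 hcomp (b n)
  have h3 : n ≤ cnt a (b n) := by omega
  have h4 : a n ≤ b n := (cnt_le_iff hainc ha0 n (b n)).1 h3
  have h5 : a n ≠ b n := disj hainc ha0 hcomp n n hn hn
  omega

private lemma lemU : ∀ n k, 1 ≤ n → 1 ≤ k → a (n + k) + 1 ≤ a n + a k + b 1 := by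
  intro n k hn hk
  have hbinc := bmono hbpos hsup
  have hb1 := b1ge2 ha1 hbpos hcomp
  obtain ⟨-, hin⟩ := cnt_b_at_a ha0 hb0 ha1 hainc hbpos hcomp hsup n
  obtain ⟨-, hjk⟩ := cnt_b_at_a ha0 hb0 ha1 hainc hbpos hcomp hsup k
  set i := cnt b (a n)
  set j := cnt b (a k)
  have han : n ≤ a n := hainc.le_apply
  have hak : k ≤ a k := hainc.le_apply
  have h1 : a n < b (i + 1) := (cnt_lt_iff hbinc hb0 (i+1) (a n)).1 (by omega)
  have h2 : a k < b (j + 1) := (cnt_lt_iff hbinc hb0 (j+1) (a k)).1 (by omega)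
  have h3 : b (i+1) + b (j+1) ≤ b (i+1+(j+1)) := (hsup _ _).1
  have h4 : b (i+1+(j+1)) + b (b 1 - 2) ≤ b (i+1+(j+1)+(b 1 - 2)) := (hsup _ _).1
  have h5 : b 1 - 2 ≤ b (b 1 - 2) := hbinc.le_apply
  have hidx : i+1+(j+1)+(b 1 - 2) = i + j + b 1 := by omega
  set x := a n + a k + b 1 - 1 with hxdef
  have hx : x < b (i + j + b 1) := by rw [← hidx]; omega
  have h6 : cnt b x < i + j + b 1 := (cnt_lt_iff hbinc hb0 _ x).2 hx
  have h7 := cnt_add hainc ha0 hbinc hb0 hcomp x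
  have h8 : n + k ≤ cnt a x := by omega
  have h9 : a (n + k) ≤ x := (cnt_le_iff hainc ha0 _ x).1 h8
  omega

private lemma lemL : ∀ n k, 1 ≤ n → 1 ≤ k → a n + a k ≤ a (n + k) + 1 := by
  intro n k hn hk
  have hbinc := bmono hbpos hsup
  have hb1 := b1ge2 ha1 hbpos hcomp
  obtain ⟨-, hin⟩ := cnt_b_at_a ha0 hb0 ha1 hainc hbpos hcomp hsup n
  obtain ⟨-, hjk⟩ := cnt_b_at_a ha0 hb0 ha1 hainc hbpos hcomp hsup k
  set i := cnt b (a n)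
  set j := cnt b (a k)
  have han : n ≤ a n := hainc.le_apply
  have hak : k ≤ a k := hainc.le_apply
  have han1 : 1 ≤ a n := by omega
  have hak1 : 1 ≤ a k := by omega
  set y := a n + a k - 2 with hydef
  have hbi : b i ≤ a n := (cnt_le_iff hbinc hb0 i (a n)).1 le_rfl
  have hbj : b j ≤ a k := (cnt_le_iff hbinc hb0 j (a k)).1 le_rfl
  have hkey : i + j ≤ cnt b y + 1 := by
    rcases Nat.eq_zero_or_pos i with hi0 | hip
    · rcases Nat.eq_zero_or_pos j with hj0 | hjp
      · omega
      · -- i = 0, j ≥ 1 : b (j-1) ≤ y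
        have hsub : b (j-1) + b 1 ≤ b j := by
          have h := (hsup (j-1) 1).1
          rwa [show j - 1 + 1 = j by omega] at h
        have hby : b (j - 1) ≤ y := by omega
        have := (cnt_le_iff hbinc hb0 (j-1) y).2 hby
        omega
    · rcases Nat.eq_zero_or_pos j with hj0 | hjp
      · have hsub : b (i-1) + b 1 ≤ b i := by
          have h := (hsup (i-1) 1).1
          rwa [show i - 1 + 1 = i by omega] at h
        have hby : b (i - 1) ≤ y := by omega
        have := (cnt_le_iff hbinc hb0 (i-1) y).2 hby
        omega
      · -- both positive
        have hbin : b i ≠ a n := fun h => disj hainc ha0 hcomp n i hn hip h.symm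
        have hsub : b (j-1) + b 1 ≤ b j := by
          have h := (hsup (j-1) 1).1
          rwa [show j - 1 + 1 = j by omega] at h
        have hupper : b (i + (j-1)) < b i + b (j-1) + b 1 := (hsup i (j-1)).2
        have hidx : i + (j - 1) = i + j - 1 := by omega
        have hby : b (i + j - 1) ≤ y := by rw [← hidx]; omega
        have := (cnt_le_iff hbinc hb0 (i+j-1) y).2 hby
        omega
  have h7 := cnt_add hainc ha0 hbinc hb0 hcomp y
  have h8 : cnt a y < n + k := by omega
  have h9 : y < a (n + k) := (cnt_lt_iff hainc ha0 _ y).1 h8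
  omega

private lemma lemC1 : ∀ m n j, 1 ≤ m → 1 ≤ n → 1 ≤ j → a m = a j + b n →
    b j + a n ≤ b m := by
  intro m n j hm hn hj he
  have hbinc := bmono hbpos hsup
  have hb1 := b1ge2 ha1 hbpos hcomp
  have h2n := b_ge_two_mul ha1 hbpos hcomp hb0 hsup n
  obtain ⟨hcaj, hJ⟩ := cnt_b_at_a ha0 hb0 ha1 hainc hbpos hcomp hsup j
  obtain ⟨hcam, -⟩ := cnt_b_at_a ha0 hb0 ha1 hainc hbpos hcomp hsup m
  set J := cnt b (a j)
  have haj : j ≤ a j := hainc.le_apply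
  have han : n ≤ a n := hainc.le_apply
  have h1 : a j < b (J + 1) := (cnt_lt_iff hbinc hb0 (J+1) (a j)).1 (by omega)
  have h2 : b (J+1) + b n ≤ b (J+1+n) := (hsup _ _).1
  have h3 : cnt b (a m) < J + 1 + n := (cnt_lt_iff hbinc hb0 _ _).2 (by omega)
  have h4 : cnt a (a m) + cnt b (a m) = a m :=
    cnt_add hainc ha0 hbinc hb0 hcomp (a m)
  rw [hcam] at h4
  -- m ≥ j + b n - n
  have hbn1 : 1 ≤ b n := hbpos n hn
  have hmj : j < m := by
    have : a j < a m := by omega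
    exact hainc.lt_iff_lt.1 this
  have hanbn : a n < b n := a_lt_b ha0 hb0 ha1 hainc hbpos hcomp hsup n hn
  -- m + n ≥ j + b n
  have hkey : j + b n ≤ m + n := by omega
  set t := m - j with ht
  -- cnt b (a n - 1) = a n - n
  have hcan1 : cnt a (a n - 1) = n - 1 := by
    apply cnt_eq hainc ha0
    · have : a (n-1) < a n := hainc (by omega)
      omega
    · have : n - 1 + 1 = n := by omega
      rw [this]; omega
  have h5 := cnt_add hainc ha0 hbinc hb0 hcomp (a n - 1)
  have h6 : cnt b (a n - 1) < t := by omega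
  have h7 : a n - 1 < b t := (cnt_lt_iff hbinc hb0 _ _).1 h6
  have h8 : b j + b t ≤ b (j + t) := (hsup _ _).1
  have h9 : j + t = m := by omega
  rw [h9] at h8
  omega

end seq2

/-- P-positions of the invariant two-pile subtraction game with move set `M`:
a position is P iff every option is an N-position. -/
def PPos2 (M : Set (ℕ × ℕ)) (x : ℕ × ℕ) : Prop :=
  ∀ r : ℕ × ℕ, r ∈ M → r ≠ (0, 0) → r.1 ≤ x.1 → r.2 ≤ x.2 →
    ¬ PPos2 M (x.1 - r.1, x.2 - r.2)
termination_by x.1 + x.2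
decreasing_by
  rename_i h1 h2
  simp only [ne_eq, Prod.ext_iff, not_and_or] at *
  omega

private lemma ppos_zero (S : Set (ℕ × ℕ)) : PPos2 S (0, 0) := by
  rw [PPos2]
  rintro ⟨r1, r2⟩ _ hne h1 h2
  exfalso
  simp only [ne_eq, Prod.mk.injEq, not_and] at hne
  simp at h1 h2
  omega

private def MS (a b : ℕ → ℕ) : Set (ℕ × ℕ) :=
  {r | ∃ n, 1 ≤ n ∧ (r = (a n, b n) ∨ r = (b n, a n))}

section game
variable {a b : ℕ → ℕ}
variable (ha0 : a 0 = 0) (hb0 : b 0 = 0) (ha1 : a 1 = 1)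
    (hainc : StrictMono a)
    (hbpos : ∀ n, 1 ≤ n → 1 ≤ b n)
    (hcomp : ∀ k : ℕ, 1 ≤ k → ((∃ n, 1 ≤ n ∧ a n = k) ↔ ¬ ∃ n, 1 ≤ n ∧ b n = k))
    (hsup : ∀ m n : ℕ, b m + b n ≤ b (m + n) ∧ b (m + n) < b m + b n + b 1)

include ha0 hb0 ha1 hainc hbpos hcomp hsup

private lemma memM_coords {r : ℕ × ℕ} (hr : r ∈ MS a b) :
    (1 ≤ r.1 ∧ b 1 ≤ r.2) ∨ (b 1 ≤ r.1 ∧ 1 ≤ r.2) := by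
  have hbinc := bmono hbpos hsup
  obtain ⟨i, hi, hc | hc⟩ := hr <;> rw [hc]
  · exact Or.inl ⟨by have : i ≤ a i := hainc.le_apply; omega, hbinc.monotone hi⟩
  · exact Or.inr ⟨hbinc.monotone hi, by have : i ≤ a i := hainc.le_apply; omega⟩

private lemma memM_ne {r : ℕ × ℕ} (hr : r ∈ MS a b) : r ≠ (0, 0) := by
  have := memM_coords ha0 hb0 ha1 hainc hbpos hcomp hsup hr
  have hb1 := b1ge2 ha1 hbpos hcomp
  intro he
  rw [he] at this
  simp at this

private lemma terminal_P {x : ℕ × ℕ}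
    (hx : x.1 = 0 ∨ x.2 = 0 ∨ (x.1 < b 1 ∧ x.2 < b 1)) : PPos2 (MS a b) x := by
  rw [PPos2]
  intro r hr hne h1 h2
  exfalso
  have hc := memM_coords ha0 hb0 ha1 hainc hbpos hcomp hsup hr
  have hb1 := b1ge2 ha1 hbpos hcomp
  omega

private lemma notP_of_move {x r : ℕ × ℕ} (hr : r ∈ MS a b)
    (h1 : r.1 ≤ x.1) (h2 : r.2 ≤ x.2)
    (htgt : PPos2 (MS a b) (x.1 - r.1, x.2 - r.2)) : ¬ PPos2 (MS a b) x := by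
  intro hP
  rw [PPos2] at hP
  exact hP r hr (memM_ne ha0 hb0 ha1 hainc hbpos hcomp hsup hr) h1 h2 htgt

private lemma keyA {m n : ℕ} (hn : 1 ≤ n) (hmn : n < m) :
    ∃ p q : ℕ, (p, q) ∈ MS a b ∧ p ≤ a m - a n ∧ q ≤ b m - b n ∧
      (a m - a n - p = 0 ∨ b m - b n - q = 0 ∨
        (a m - a n - p < b 1 ∧ b m - b n - q < b 1)) := by
  have hbinc := bmono hbpos hsup
  have hb1 := b1ge2 ha1 hbpos hcomp
  set k := m - n with hk
  have hk1 : 1 ≤ k := by omega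
  have hm : m = n + k := by omega
  have hw1 : b n + b k ≤ b m := by rw [hm]; exact (hsup n k).1
  have hw2 : b m < b n + b k + b 1 := by rw [hm]; exact (hsup n k).2
  have hv1 : a n + a k ≤ a m + 1 := by
    rw [hm]; exact lemL ha0 hb0 ha1 hainc hbpos hcomp hsup n k hn hk1
  have hv2 : a m + 1 ≤ a n + a k + b 1 := by
    rw [hm]; exact lemU ha0 hb0 ha1 hainc hbpos hcomp hsup n k hn hk1
  have hvpos : a n < a m := hainc hmn
  by_cases hcase : a n + a k ≤ a m
  · exact ⟨a k, b k, ⟨k, hk1, Or.inl rfl⟩, by omega, by omega,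
      Or.inr (Or.inr ⟨by omega, by omega⟩)⟩
  · -- a m - a n = a k - 1
    have hak1 : 1 ≤ a k := by have : k ≤ a k := hainc.le_apply; omega
    have hv : (a m - a n) + 1 = a k := by omega
    have hv1' : 1 ≤ a m - a n := by omega
    rcases total hcomp (a m - a n) hv1' with ⟨i, hi, hai⟩ | ⟨i, hi, hbi⟩
    · have hik : i < k := hainc.lt_iff_lt.1 (by omega)
      have hbik : b i < b k := hbinc hik
      exact ⟨a i, b i, ⟨i, hi, Or.inl rfl⟩, by omega, by omega, Or.inl (by omega)⟩
    · have haik : a i < b i := a_lt_b ha0 hb0 ha1 hainc hbpos hcomp hsup i hi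
      have hakbk : a k < b k := a_lt_b ha0 hb0 ha1 hainc hbpos hcomp hsup k hk1
      exact ⟨b i, a i, ⟨i, hi, Or.inr rfl⟩, by omega, by omega, Or.inl (by omega)⟩

private lemma keyC {m n : ℕ} (hm : 1 ≤ m) (hn : 1 ≤ n)
    (h1 : b n ≤ a m) (h2 : a n ≤ b m) :
    ∃ p q : ℕ, (p, q) ∈ MS a b ∧ p ≤ a m - b n ∧ q ≤ b m - a n ∧
      a m - b n - p = 0 := by
  have hbinc := bmono hbpos hsup
  have hne : a m ≠ b n := disj hainc ha0 hcomp m n hm hn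
  have hu1 : 1 ≤ a m - b n := by omega
  have hanbn : a n < b n := a_lt_b ha0 hb0 ha1 hainc hbpos hcomp hsup n hn
  have hambm : a m < b m := a_lt_b ha0 hb0 ha1 hainc hbpos hcomp hsup m hm
  rcases total hcomp (a m - b n) hu1 with ⟨j, hj, haj⟩ | ⟨i, hi, hbi⟩
  · have hC1 : b j + a n ≤ b m :=
      lemC1 ha0 hb0 ha1 hainc hbpos hcomp hsup m n j hm hn hj (by omega)
    exact ⟨a j, b j, ⟨j, hj, Or.inl rfl⟩, by omega, by omega, by omega⟩
  · have haibi : a i < b i := a_lt_b ha0 hb0 ha1 hainc hbpos hcomp hsup i hi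
    exact ⟨b i, a i, ⟨i, hi, Or.inr rfl⟩, by omega, by omega, by omega⟩

private lemma star {s t : ℕ × ℕ} (hs : s ∈ MS a b) (ht : t ∈ MS a b)
    (h1 : t.1 ≤ s.1) (h2 : t.2 ≤ s.2) (hne : t ≠ s) :
    ¬ PPos2 (MS a b) (s.1 - t.1, s.2 - t.2) := by
  have hbinc := bmono hbpos hsup
  obtain ⟨s1, s2⟩ := s
  obtain ⟨t1, t2⟩ := t
  simp only at h1 h2 ⊢
  obtain ⟨m, hm, hsc | hsc⟩ := hs <;> obtain ⟨n, hn, htc | htc⟩ := ht <;>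
    rw [Prod.mk.injEq] at hsc htc <;>
    obtain ⟨rfl, rfl⟩ := hsc <;> obtain ⟨rfl, rfl⟩ := htc
  · -- (a m, b m) - (a n, b n)
    have hmn : n < m := by
      rcases Nat.lt_trichotomy n m with h | h | h
      · exact h
      · exfalso; subst h; exact hne rfl
      · exact absurd (hainc h) (by omega)
    obtain ⟨p, q, hpq, hp, hq, hterm⟩ :=
      keyA ha0 hb0 ha1 hainc hbpos hcomp hsup hn hmn
    exact notP_of_move ha0 hb0 ha1 hainc hbpos hcomp hsup hpq hp hq
      (terminal_P ha0 hb0 ha1 hainc hbpos hcomp hsup (by simpa using hterm))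
  · -- (a m, b m) - (b n, a n)
    obtain ⟨p, q, hpq, hp, hq, hterm⟩ :=
      keyC ha0 hb0 ha1 hainc hbpos hcomp hsup hm hn h1 h2
    exact notP_of_move ha0 hb0 ha1 hainc hbpos hcomp hsup hpq hp hq
      (terminal_P ha0 hb0 ha1 hainc hbpos hcomp hsup (Or.inl (by simpa using hterm)))
  · -- (b m, a m) - (a n, b n)
    obtain ⟨p, q, hpq, hp, hq, hterm⟩ :=
      keyC ha0 hb0 ha1 hainc hbpos hcomp hsup hm hn h2 h1
    have hpq' : (q, p) ∈ MS a b := by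
      obtain ⟨i, hi, hc | hc⟩ := hpq <;> rw [Prod.mk.injEq] at hc <;>
        exact ⟨i, hi, by simp [hc.1, hc.2]⟩
    exact notP_of_move ha0 hb0 ha1 hainc hbpos hcomp hsup hpq' hq hp
      (terminal_P ha0 hb0 ha1 hainc hbpos hcomp hsup
        (Or.inr (Or.inl (by simpa using hterm))))
  · -- (b m, a m) - (b n, a n)
    have hmn : n < m := by
      rcases Nat.lt_trichotomy n m with h | h | h
      · exact h
      · exfalso; subst h; exact hne rfl
      · exact absurd (hbinc h) (by omega)
    obtain ⟨p, q, hpq, hp, hq, hterm⟩ :=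
      keyA ha0 hb0 ha1 hainc hbpos hcomp hsup hn hmn
    have hpq' : (q, p) ∈ MS a b := by
      obtain ⟨i, hi, hc | hc⟩ := hpq <;> rw [Prod.mk.injEq] at hc <;>
        exact ⟨i, hi, by simp [hc.1, hc.2]⟩
    exact notP_of_move ha0 hb0 ha1 hainc hbpos hcomp hsup hpq' hq hp
      (terminal_P ha0 hb0 ha1 hainc hbpos hcomp hsup (by simp only at hterm ⊢; omega))

end game

theorem stmt_13 (a b : ℕ → ℕ)
    (ha0 : a 0 = 0) (hb0 : b 0 = 0) (ha1 : a 1 = 1)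
    (hainc : StrictMono a)
    (hbpos : ∀ n, 1 ≤ n → 1 ≤ b n)
    (hcomp : ∀ k : ℕ, 1 ≤ k → ((∃ n, 1 ≤ n ∧ a n = k) ↔ ¬ ∃ n, 1 ≤ n ∧ b n = k))
    (hsup : ∀ m n : ℕ, b m + b n ≤ b (m + n) ∧ b (m + n) < b m + b n + b 1) :
    ∀ p : ℕ × ℕ,
      (PPos2 {q | PPos2 {r | ∃ n, 1 ≤ n ∧ (r = (a n, b n) ∨ r = (b n, a n))} q ∧
          q ≠ (0, 0)} p ∧ p ≠ (0, 0))
        ↔ ∃ n, 1 ≤ n ∧ (p = (a n, b n) ∨ p = (b n, a n)) := by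
  have hMS : {r | ∃ n, 1 ≤ n ∧ (r = (a n, b n) ∨ r = (b n, a n))} = MS a b := rfl
  rw [hMS]
  set S : Set (ℕ × ℕ) := {q | PPos2 (MS a b) q ∧ q ≠ (0, 0)} with hS
  -- main induction
  have main : ∀ N, ∀ p : ℕ × ℕ, p.1 + p.2 ≤ N →
      (PPos2 S p ↔ (p ∈ MS a b ∨ p = (0, 0))) := by
    intro N
    induction N with
    | zero =>
      intro p hp
      have hp0 : p = (0, 0) := by
        obtain ⟨p1, p2⟩ := p
        simp only at hp
        rw [Prod.mk.injEq]
        omega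
      rw [hp0]
      exact ⟨fun _ => Or.inr rfl, fun _ => ppos_zero S⟩
    | succ N ih =>
      intro p hp
      constructor
      · -- forward
        intro hP
        by_contra hcon
        push_neg at hcon
        obtain ⟨hpM, hp0⟩ := hcon
        by_cases hP1 : PPos2 (MS a b) p
        · rw [PPos2] at hP
          refine hP p ⟨hP1, hp0⟩ hp0 le_rfl le_rfl ?_
          simp only [Nat.sub_self]
          exact ppos_zero S
        · rw [PPos2] at hP1
          push_neg at hP1
          obtain ⟨r, hrM, hrne, hr1, hr2, hPr⟩ := hP1
          set q : ℕ × ℕ := (p.1 - r.1, p.2 - r.2) with hq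
          have hq0 : q ≠ (0, 0) := by
            intro he
            apply hpM
            have h1 : r.1 = p.1 := by
              have := congrArg Prod.fst he; simp [hq] at this; omega
            have h2 : r.2 = p.2 := by
              have := congrArg Prod.snd he; simp [hq] at this; omega
            have : r = p := Prod.ext h1 h2
            rwa [← this]
          rw [PPos2] at hP
          have hrne' : 1 ≤ r.1 + r.2 := by
            by_contra h
            exact hrne (Prod.ext (by omega) (by omega))
          refine hP q ⟨hPr, hq0⟩ hq0 (by simp [hq]) (by simp [hq]) ?_
          have hco1 : p.1 - q.1 = r.1 := by simp only [hq]; omega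
          have hco2 : p.2 - q.2 = r.2 := by simp only [hq]; omega
          rw [hco1, hco2]
          have hrsum : r.1 + r.2 ≤ N := by
            have hq1 : 1 ≤ q.1 + q.2 := by
              by_contra h
              exact hq0 (Prod.ext (by simp [hq] at h ⊢; omega) (by simp [hq] at h ⊢; omega))
            simp only [hq] at hq1
            omega
          have := (ih r hrsum).2 (Or.inl hrM)
          exact (Prod.mk.eta (p := r)) ▸ this
      · -- backward
        intro hpM
        rw [PPos2]
        rintro r ⟨hPr, hr0⟩ _ hr1 hr2
        intro hPq
        set q : ℕ × ℕ := (p.1 - r.1, p.2 - r.2) with hq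
        have hrpos : 1 ≤ r.1 + r.2 := by
          by_contra h
          exact hr0 (Prod.ext (by omega) (by omega))
        have hqsum : q.1 + q.2 ≤ N := by simp only [hq]; omega
        have hqM := (ih q hqsum).1 hPq
        rcases hpM with hpM | rfl
        · rcases hqM with hqM | hq0
          · -- q ∈ M, p ∈ M : contradiction with star
            have hqle1 : q.1 ≤ p.1 := by simp [hq]
            have hqle2 : q.2 ≤ p.2 := by simp [hq]
            have hqnep : q ≠ p := by
              intro he
              have h1 := congrArg Prod.fst he
              have h2 := congrArg Prod.snd he
              simp only [hq] at h1 h2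
              exact hr0 (Prod.ext (by omega) (by omega))
            have hstar := star ha0 hb0 ha1 hainc hbpos hcomp hsup hpM hqM hqle1 hqle2 hqnep
            have hco1 : p.1 - q.1 = r.1 := by simp only [hq]; omega
            have hco2 : p.2 - q.2 = r.2 := by simp only [hq]; omega
            rw [hco1, hco2] at hstar
            exact hstar ((Prod.mk.eta (p := r)) ▸ hPr)
          · -- q = 0 : r = p, but p ∈ M is an N-position
            have h1 : r.1 = p.1 := by
              have := congrArg Prod.fst hq0; simp [hq] at this; omega
            have h2 : r.2 = p.2 := by
              have := congrArg Prod.snd hq0; simp [hq] at this; omega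
            have hrp : r = p := Prod.ext h1 h2
            rw [hrp] at hPr
            have : ¬ PPos2 (MS a b) p := by
              apply notP_of_move ha0 hb0 ha1 hainc hbpos hcomp hsup hpM le_rfl le_rfl
              simp only [Nat.sub_self]
              exact ppos_zero _
            exact this hPr
        · -- p = 0: no moves
          simp only at hr1 hr2
          exact hr0 (Prod.ext (by omega) (by omega))
  intro p
  constructor
  · rintro ⟨h1, h2⟩
    rcases (main (p.1 + p.2) p le_rfl).1 h1 with h | h
    · exact h
    · exact absurd h h2
  · intro hpM
    refine ⟨(main (p.1 + p.2) p le_rfl).2 (Or.inl hpM), ?_⟩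
    exact memM_ne ha0 hb0 ha1 hainc hbpos hcomp hsup hpM
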